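/- arXiv:1406.3152 — 4 statements merged into one kernel-verified Lean document; each statement's English description precedes it below -/
import Mathlib

section
/- Let A be an abelian ℓ-group. Then A is Archimedean if and only if the bands of A coincide with the polars of A; since every polar of A is a band, this says: A is Archimedean if and only if every band I of A satisfies I = I^⊥⊥ (i.e., every band is a polar). -/
/-!
If `A` is Archimedean and `I` is a band, every `0 ≤ u ∈ I^⊥⊥` is the supremum of
`{v ∈ I : 0 ≤ v ≤ u}`: for an upper bound `b`, the element `d = u - b ⊓ u` is disjoint from `I`,
since for `i ∈ I` all multiples of `d ⊓ |i|` lie in `I` below `u`; hence `d ∈ I^⊥ ∩ I^⊥⊥ = 0`.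

Conversely, suppose `0 ≤ n • g ≤ h` for all `n ≥ 1` and let `P = g^⊥ + ℕ g`. The set `E` of all `x`
with `|x| = ⨆_{c ∈ P} |x| ⊓ c` is a band containing `g` and `g^⊥`, so `E^⊥ = 0` and
`E = E^⊥⊥ = A`. But `h ⊓ (c₀ + n • g) ≤ h - g` for every `c₀ ∈ g^⊥`, so `h ∈ E` gives
`h ≤ h - g`, i.e. `g = 0`.
-/

/-- The absolute value `|g| = (g ⊔ 0) + ((-g) ⊔ 0)` in a lattice-ordered abelian group. -/
def absl {A : Type*} [Lattice A] [AddCommGroup A] (g : A) : A :=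
  (g ⊔ 0) + (-g ⊔ 0)

/-- The polar `T^⊥ = {x : |x| ⊓ |t| = 0 for all t ∈ T}`. -/
def polar {A : Type*} [Lattice A] [AddCommGroup A] (T : Set A) : Set A :=
  {x : A | ∀ t ∈ T, absl x ⊓ absl t = 0}

/-- An ideal of an abelian ℓ-group: an order-convex sublattice subgroup. -/
structure IsIdeal {A : Type*} [Lattice A] [AddCommGroup A] (I : Set A) : Prop where
  zero_mem : (0 : A) ∈ I
  add_mem : ∀ ⦃a b : A⦄, a ∈ I → b ∈ I → a + b ∈ I
  neg_mem : ∀ ⦃a : A⦄, a ∈ I → -a ∈ I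
  sup_mem : ∀ ⦃a b : A⦄, a ∈ I → b ∈ I → a ⊔ b ∈ I
  inf_mem : ∀ ⦃a b : A⦄, a ∈ I → b ∈ I → a ⊓ b ∈ I
  convex : ∀ ⦃a b c : A⦄, a ∈ I → c ∈ I → a ≤ b → b ≤ c → b ∈ I

/-- A band: an ideal closed under all suprema that exist in `A`. -/
structure IsBand {A : Type*} [Lattice A] [AddCommGroup A] (I : Set A) : Prop where
  ideal : IsIdeal I
  sup_closed : ∀ S : Set A, S ⊆ I → ∀ a : A, IsLUB S a → a ∈ I

/-- `A` is Archimedean: whenever `0 ≤ n • g ≤ h` for all integers `n ≥ 1`, then `g = 0`. -/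
def IsArch (A : Type*) [Lattice A] [AddCommGroup A] : Prop :=
  ∀ g h : A, (∀ n : ℕ, 1 ≤ n → 0 ≤ n • g ∧ n • g ≤ h) → g = 0

section Lattice

variable {A : Type*} [Lattice A] [AddCommGroup A]

lemma polar_anti {S T : Set A} (h : S ⊆ T) : polar T ⊆ polar S :=
  fun _ hx t ht => hx t (h ht)

lemma subset_polar_polar (T : Set A) : T ⊆ polar (polar T) :=
  fun x hx t ht => by rw [inf_comm]; exact ht x hx

lemma IsIdeal.abs_mem {I : Set A} (hI : IsIdeal I) {t : A} (ht : t ∈ I) : |t| ∈ I :=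
  hI.sup_mem ht (hI.neg_mem ht)

lemma IsIdeal.nsmul_mem {I : Set A} (hI : IsIdeal I) {t : A} (ht : t ∈ I) (n : ℕ) :
    n • t ∈ I := by
  induction n with
  | zero => simpa using hI.zero_mem
  | succ n ih => rw [succ_nsmul]; exact hI.add_mem ih ht

end Lattice

section LatticeOrderedGroup

variable {A : Type*} [Lattice A] [AddCommGroup A] [CovariantClass A A (· + ·) (· ≤ ·)]

lemma absl_eq_abs (a : A) : absl a = |a| := posPart_add_negPart a

lemma abs_posPart_le_abs (a : A) : |a⁺| ≤ |a| := by
  rw [abs_of_nonneg (posPart_nonneg a)]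
  exact sup_le (le_abs_self a) (abs_nonneg a)

lemma abs_negPart_le_abs (a : A) : |a⁻| ≤ |a| := by
  rw [abs_of_nonneg (negPart_nonneg a)]
  exact sup_le (neg_le_abs a) (abs_nonneg a)

lemma add_inf_le_inf_add_inf {x y c : A} (hx : 0 ≤ x) (hy : 0 ≤ y) (hc : 0 ≤ c) :
    (x + y) ⊓ c ≤ x ⊓ c + y ⊓ c := by
  rw [add_inf y c (x ⊓ c), inf_add x c y, inf_add x c c]
  refine le_inf (le_inf inf_le_left ?_) (le_inf ?_ ?_)
  · exact inf_le_right.trans (le_add_of_nonneg_right hy)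
  · exact inf_le_right.trans (le_add_of_nonneg_left hx)
  · exact inf_le_right.trans (le_add_of_nonneg_right hc)

lemma IsLUB.image_inf_left {S : Set A} {s : A} (h : IsLUB S s) (a : A) :
    IsLUB ((a ⊓ ·) '' S) (a ⊓ s) := by
  refine ⟨?_, fun b hb => ?_⟩
  · rintro _ ⟨x, hx, rfl⟩
    exact inf_le_inf_left a (h.1 hx)
  · -- `a ⊓ x + a ⊔ x = a + x` bounds every `x ∈ S`, hence `s`, by `b + (a ⊔ s) - a`
    have hs : s ≤ b + (a ⊔ s) - a := h.2 fun x hx => by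
      rw [le_sub_iff_add_le, add_comm x a, ← inf_add_sup a x]
      exact add_le_add (hb ⟨x, hx, rfl⟩) (sup_le_sup_left (h.1 hx) a)
    rw [← add_le_add_iff_right (a ⊔ s), inf_add_sup]
    calc a + s ≤ a + (b + (a ⊔ s) - a) := add_le_add_right hs a
      _ = b + (a ⊔ s) := by abel

lemma mem_polar_iff {T : Set A} {x : A} : x ∈ polar T ↔ ∀ t ∈ T, |x| ⊓ |t| = 0 := by
  simp only [polar, Set.mem_ofPred_eq, absl_eq_abs]

lemma mem_polar_of_abs_le {T : Set A} {x y : A} (h : |y| ≤ |x|) (hx : x ∈ polar T) :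
    y ∈ polar T := by
  rw [mem_polar_iff] at hx ⊢
  intro t ht
  refine le_antisymm ?_ (le_inf (abs_nonneg y) (abs_nonneg t))
  exact (inf_le_inf_right _ h).trans (hx t ht).le

lemma zero_mem_polar (T : Set A) : (0 : A) ∈ polar T :=
  mem_polar_iff.2 fun t _ => by rw [abs_zero]; exact inf_eq_left.2 (abs_nonneg t)

lemma add_mem_polar {T : Set A} {x y : A} (hx : x ∈ polar T) (hy : y ∈ polar T) :
    x + y ∈ polar T := by
  rw [mem_polar_iff] at hx hy ⊢
  intro t ht
  refine le_antisymm ?_ (le_inf (abs_nonneg _) (abs_nonneg t))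
  calc |x + y| ⊓ |t| ≤ (|x| + |y|) ⊓ |t| := inf_le_inf_right _ (abs_add_le x y)
    _ ≤ |x| ⊓ |t| + |y| ⊓ |t| :=
      add_inf_le_inf_add_inf (abs_nonneg x) (abs_nonneg y) (abs_nonneg t)
    _ = 0 := by rw [hx t ht, hy t ht, add_zero]

lemma eq_zero_of_mem_polar_of_mem {T : Set A} {x : A} (hx : x ∈ polar T) (hxT : x ∈ T) :
    x = 0 := by
  have h : |x| = 0 := by simpa only [inf_idem] using mem_polar_iff.1 hx x hxT
  exact le_antisymm (h ▸ le_abs_self x) (neg_nonpos.1 (h ▸ neg_le_abs x))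

lemma polar_polar_eq_univ {T I : Set A} (hT : T ⊆ I) (hTI : polar T ⊆ I) :
    polar (polar I) = Set.univ := by
  refine Set.eq_univ_of_forall fun x => mem_polar_iff.2 fun t ht => ?_
  rw [eq_zero_of_mem_polar_of_mem ht (hTI (polar_anti hT ht)), abs_zero]
  exact inf_eq_right.2 (abs_nonneg x)

def polarAddSubmonoid (T : Set A) : AddSubmonoid A where
  carrier := polar T
  zero_mem' := zero_mem_polar T
  add_mem' := add_mem_polar

lemma IsIdeal.of_solid {I : Set A} (zero_mem : (0 : A) ∈ I)
    (add_mem : ∀ ⦃a b : A⦄, a ∈ I → b ∈ I → a + b ∈ I)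
    (solid : ∀ ⦃x y : A⦄, |y| ≤ |x| → x ∈ I → y ∈ I) : IsIdeal I := by
  have dominated : ∀ ⦃a c x : A⦄, a ∈ I → c ∈ I → x ≤ |a| + |c| → -x ≤ |a| + |c| → x ∈ I := by
    intro a c x ha hc h₁ h₂
    refine solid ?_ (add_mem (solid (abs_abs a).le ha) (solid (abs_abs c).le hc))
    rw [abs_of_nonneg (add_nonneg (abs_nonneg a) (abs_nonneg c))]
    exact abs_le'.2 ⟨h₁, h₂⟩
  have le_left : ∀ {a : A} (c : A), |a| ≤ |a| + |c| :=
    fun c => le_add_of_nonneg_right (abs_nonneg c)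
  have le_right : ∀ (a : A) {c : A}, |c| ≤ |a| + |c| :=
    fun a => le_add_of_nonneg_left (abs_nonneg a)
  refine ⟨zero_mem, add_mem, fun a ha => solid (abs_neg a).le ha, ?_, ?_, ?_⟩
  · intro a c ha hc
    refine dominated ha hc ?_ ?_
    · exact sup_le ((le_abs_self a).trans (le_left c)) ((le_abs_self c).trans (le_right a))
    · rw [neg_sup]
      exact inf_le_left.trans ((neg_le_abs a).trans (le_left c))
  · intro a c ha hc
    refine dominated ha hc ?_ ?_
    · exact inf_le_left.trans ((le_abs_self a).trans (le_left c))
    · rw [neg_inf]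
      exact sup_le ((neg_le_abs a).trans (le_left c)) ((neg_le_abs c).trans (le_right a))
  · intro a x c ha hc hax hxc
    refine dominated ha hc ((hxc.trans (le_abs_self c)).trans (le_right a)) ?_
    exact ((neg_le_neg_iff.2 hax).trans (neg_le_abs a)).trans (le_left c)

end LatticeOrderedGroup

section Archimedean

variable {A : Type*} [Lattice A] [AddCommGroup A] [CovariantClass A A (· + ·) (· ≤ ·)]

lemma IsIdeal.sub_inf_mem_polar (hA : IsArch A) {I : Set A} (hI : IsIdeal I) {u b : A}
    (hu : 0 ≤ u) (hb : ∀ v ∈ I, 0 ≤ v → v ≤ u → v ≤ b) : u - b ⊓ u ∈ polar I := by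
  set d := u - b ⊓ u
  have hd : 0 ≤ d := sub_nonneg.2 inf_le_right
  refine mem_polar_iff.2 fun t ht => ?_
  rw [abs_of_nonneg hd]
  set e := d ⊓ |t|
  have he : 0 ≤ e := le_inf hd (abs_nonneg t)
  have heI : e ∈ I := hI.convex hI.zero_mem (hI.abs_mem ht) he inf_le_right
  have hne : ∀ n : ℕ, n • e ≤ u := by
    intro n
    induction n with
    | zero => simpa using hu
    | succ n ih =>
      calc (n + 1) • e = n • e + e := succ_nsmul e n
        _ ≤ b ⊓ u + d :=
          add_le_add (le_inf (hb _ (hI.nsmul_mem heI n) (nsmul_nonneg he n) ih) ih) inf_le_left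
        _ = u := add_sub_cancel _ _
  exact hA e u fun n _ => ⟨nsmul_nonneg he n, hne n⟩

lemma IsBand.mem_of_nonneg_mem_polar_polar (hA : IsArch A) {I : Set A} (hI : IsBand I) {u : A}
    (hu : 0 ≤ u) (hmem : u ∈ polar (polar I)) : u ∈ I := by
  refine hI.sup_closed {v | v ∈ I ∧ 0 ≤ v ∧ v ≤ u} (fun v hv => hv.1) u
    ⟨fun v hv => hv.2.2, fun b hb => ?_⟩
  have hb' : ∀ v ∈ I, 0 ≤ v → v ≤ u → v ≤ b := fun v hvI hv hvu => hb ⟨hvI, hv, hvu⟩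
  have hd : u - b ⊓ u ∈ polar I := hI.ideal.sub_inf_mem_polar hA hu hb'
  have hb0 : 0 ≤ b := hb' 0 hI.ideal.zero_mem le_rfl hu
  have hd' : u - b ⊓ u ∈ polar (polar I) := by
    refine mem_polar_of_abs_le ?_ hmem
    rw [abs_of_nonneg hu, abs_of_nonneg (sub_nonneg.2 inf_le_right)]
    exact sub_le_self u (le_inf hb0 hu)
  rw [sub_eq_zero.1 (eq_zero_of_mem_polar_of_mem hd' hd)]
  exact inf_le_left

lemma IsBand.polar_polar_eq (hA : IsArch A) {I : Set A} (hI : IsBand I) :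
    polar (polar I) = I := by
  refine (Set.Subset.antisymm (fun x hx => ?_) (subset_polar_polar I))
  have hpos := hI.mem_of_nonneg_mem_polar_polar hA (posPart_nonneg x)
    (mem_polar_of_abs_le (abs_posPart_le_abs x) hx)
  have hneg := hI.mem_of_nonneg_mem_polar_polar hA (negPart_nonneg x)
    (mem_polar_of_abs_le (abs_negPart_le_abs x) hx)
  have h := hI.ideal.add_mem hpos (hI.ideal.neg_mem hneg)
  rwa [← sub_eq_add_neg, posPart_sub_negPart] at h

end Archimedean

section BandClosure

variable {A : Type*} [Lattice A] [AddCommGroup A]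

/-- For `P` the positive cone of an ideal `J`, this is the band generated by `J`. -/
def bandClosure (P : AddSubmonoid A) : Set A :=
  {x | IsLUB ((|x| ⊓ ·) '' P) |x|}

variable {P : AddSubmonoid A}

lemma mem_bandClosure_of_abs_mem {x : A} (hx : |x| ∈ P) : x ∈ bandClosure P :=
  IsGreatest.isLUB ⟨⟨|x|, hx, inf_idem _⟩, by rintro _ ⟨c, -, rfl⟩; exact inf_le_left⟩

lemma mem_bandClosure_of_isLUB {x : A} {T : Set A} (hT : IsLUB T |x|)
    (h : ∀ t ∈ T, ∃ c ∈ P, t ≤ |x| ⊓ c) : x ∈ bandClosure P := by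
  refine ⟨by rintro _ ⟨c, -, rfl⟩; exact inf_le_left, fun b hb => hT.2 fun t ht => ?_⟩
  obtain ⟨c, hc, htc⟩ := h t ht
  exact htc.trans (hb ⟨c, hc, rfl⟩)

variable [CovariantClass A A (· + ·) (· ≤ ·)]

lemma mem_bandClosure_of_abs_le {x y : A} (h : |y| ≤ |x|) (hx : x ∈ bandClosure P) :
    y ∈ bandClosure P := by
  have hT := hx.image_inf_left |y|
  rw [inf_eq_left.2 h] at hT
  refine mem_bandClosure_of_isLUB hT ?_
  rintro _ ⟨_, ⟨c, hc, rfl⟩, rfl⟩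
  exact ⟨c, hc, inf_le_inf_left _ inf_le_right⟩

lemma add_mem_bandClosure {x y : A} (hx : x ∈ bandClosure P) (hy : y ∈ bandClosure P) :
    x + y ∈ bandClosure P := by
  have hT := (IsLUB.add hx hy).image_inf_left |x + y|
  rw [inf_eq_left.2 (abs_add_le x y)] at hT
  refine mem_bandClosure_of_isLUB hT ?_
  rintro _ ⟨_, ⟨_, ⟨c, hc, rfl⟩, _, ⟨c', hc', rfl⟩, rfl⟩, rfl⟩
  exact ⟨c + c', P.add_mem hc hc', inf_le_inf_left _ (add_le_add inf_le_right inf_le_right)⟩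

lemma isIdeal_bandClosure : IsIdeal (bandClosure P) :=
  .of_solid (mem_bandClosure_of_abs_mem (by rw [abs_zero]; exact P.zero_mem))
    (fun _ _ => add_mem_bandClosure) (fun _ _ => mem_bandClosure_of_abs_le)

lemma mem_bandClosure_of_isLUB_of_nonneg {S : Set A} (hS : S ⊆ bandClosure P)
    (hS₀ : ∀ s ∈ S, 0 ≤ s) {a : A} (ha : IsLUB S a) (ha₀ : 0 ≤ a) : a ∈ bandClosure P := by
  have hT : IsLUB (Set.image2 (· ⊓ ·) S P) |a| := by
    rw [abs_of_nonneg ha₀]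
    refine ⟨Set.forall_mem_image2.2 fun s hs _ _ => inf_le_left.trans (ha.1 hs),
      fun b hb => ha.2 fun s hs => ?_⟩
    have hs' : IsLUB ((|s| ⊓ ·) '' P) |s| := hS hs
    rw [abs_of_nonneg (hS₀ s hs)] at hs'
    exact hs'.2 (by rintro _ ⟨c, hc, rfl⟩; exact hb ⟨s, hs, c, hc, rfl⟩)
  refine mem_bandClosure_of_isLUB hT (Set.forall_mem_image2.2 fun s hs c hc => ⟨c, hc, ?_⟩)
  rw [abs_of_nonneg ha₀]
  exact inf_le_inf_right c (ha.1 hs)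

lemma isBand_bandClosure : IsBand (bandClosure P) := by
  refine ⟨isIdeal_bandClosure, fun S hS a ha => ?_⟩
  rcases S.eq_empty_or_nonempty with rfl | ⟨s₀, hs₀⟩
  · have hbot := isLUB_empty_iff.1 ha
    rw [le_antisymm (hbot 0) ((le_add_iff_nonneg_right a).1 (hbot (a + a)))]
    exact isIdeal_bandClosure.zero_mem
  · have hlub_pos : IsLUB ((·⁺) '' S) a⁺ := by
      refine ⟨by rintro _ ⟨s, hs, rfl⟩; exact posPart_mono (ha.1 hs), fun b hb => ?_⟩
      exact sup_le (ha.2 fun s hs => (le_posPart s).trans (hb ⟨s, hs, rfl⟩))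
        ((posPart_nonneg s₀).trans (hb ⟨s₀, hs₀, rfl⟩))
    have ha_pos : a⁺ ∈ bandClosure P := by
      refine mem_bandClosure_of_isLUB_of_nonneg ?_ ?_ hlub_pos (posPart_nonneg a)
      · rintro _ ⟨s, hs, rfl⟩
        exact mem_bandClosure_of_abs_le (abs_posPart_le_abs s) (hS hs)
      · rintro _ ⟨s, -, rfl⟩
        exact posPart_nonneg s
    have ha_neg : a⁻ ∈ bandClosure P := by
      refine mem_bandClosure_of_abs_le ?_ (hS hs₀)
      rw [abs_of_nonneg (negPart_nonneg a)]
      exact (negPart_anti (ha.1 hs₀)).trans ((abs_negPart_le_abs s₀).trans' (le_abs_self _))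
    have h := isIdeal_bandClosure.add_mem ha_pos (isIdeal_bandClosure.neg_mem ha_neg)
    rwa [← sub_eq_add_neg, posPart_sub_negPart] at h

end BandClosure

section Converse

variable {A : Type*} [Lattice A] [AddCommGroup A] [CovariantClass A A (· + ·) (· ≤ ·)]

lemma inf_add_nsmul_le_sub {g h c₀ : A} (hc₀ : c₀ ∈ polar {g}) {n : ℕ} (hn : (n + 1) • g ≤ h) :
    h ⊓ (c₀ + n • g) ≤ h - g := by
  have hgc : g ⊓ c₀ ≤ 0 := by
    rw [← mem_polar_iff.1 hc₀ g rfl, inf_comm]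
    exact inf_le_inf (le_abs_self c₀) (le_abs_self g)
  rw [le_sub_iff_add_le, inf_add]
  calc (h + g) ⊓ (c₀ + n • g + g) = (h + g) ⊓ (c₀ + (n + 1) • g) := by
        rw [succ_nsmul, add_assoc]
    _ ≤ (g + h) ⊓ (c₀ + h) := by rw [add_comm h g]; gcongr
    _ = g ⊓ c₀ + h := (inf_add g c₀ h).symm
    _ ≤ h := add_le_of_nonpos_left hgc

lemma isArch_of_forall_isBand_polar_polar_eq
    (H : ∀ I : Set A, IsBand I → polar (polar I) = I) : IsArch A := by
  intro g h hgh
  have hg : 0 ≤ g := by simpa using (hgh 1 le_rfl).1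
  have hh : 0 ≤ h := hg.trans (by simpa using (hgh 1 le_rfl).2)
  set P := polarAddSubmonoid {g} ⊔ AddSubmonoid.multiples g
  have hgE : g ∈ bandClosure P := by
    refine mem_bandClosure_of_abs_mem ?_
    rw [abs_of_nonneg hg]
    exact AddSubmonoid.mem_sup_right (AddSubmonoid.mem_multiples g)
  have hpolarE : polar {g} ⊆ bandClosure P := fun t ht =>
    mem_bandClosure_of_abs_mem (AddSubmonoid.mem_sup_left (mem_polar_of_abs_le (abs_abs t).le ht))
  have hhE : IsLUB ((|h| ⊓ ·) '' P) |h| := by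
    change h ∈ bandClosure P
    rw [← H _ isBand_bandClosure, polar_polar_eq_univ (Set.singleton_subset_iff.2 hgE) hpolarE]
    trivial
  rw [abs_of_nonneg hh] at hhE
  have hhg : h ≤ h - g := by
    refine hhE.2 ?_
    rintro _ ⟨c, hc, rfl⟩
    obtain ⟨c₀, hc₀, _, ⟨n, rfl⟩, rfl⟩ := AddSubmonoid.mem_sup.1 hc
    exact inf_add_nsmul_le_sub hc₀ (hgh (n + 1) (Nat.le_add_left 1 n)).2
  exact le_antisymm (le_sub_self_iff h |>.1 hhg) hg

end Converse

/-- An abelian ℓ-group is Archimedean if and only if every band is a polar,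
i.e. every band `I` satisfies `I^⊥⊥ = I`. -/
theorem statement0 {A : Type*} [Lattice A] [AddCommGroup A]
    [CovariantClass A A (· + ·) (· ≤ ·)] :
    IsArch A ↔ ∀ I : Set A, IsBand I → polar (polar I) = I :=
  ⟨fun hA _ hI => hI.polar_polar_eq hA, isArch_of_forall_isBand_polar_polar_eq⟩
end

section
/- Let G be an Archimedean abelian ℓ-group with a strong unit u. If g ∈ G belongs to every maximal ideal of G, then g = 0; that is, the intersection of all maximal ideals of G is {0} (so the Yosida representation of (G,u) is injective). -/
/-- A maximal ideal: a proper ideal that is inclusion-maximal among proper ideals. -/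
def IsMaximalIdeal {A : Type*} [Lattice A] [AddCommGroup A] (m : Set A) : Prop :=
  IsIdeal m ∧ m ≠ Set.univ ∧
    ∀ I : Set A, IsIdeal I → I ≠ Set.univ → m ⊆ I → I = m

section LatticeOrderedGroup

variable {A : Type*} [Lattice A] [AddCommGroup A]

namespace IsIdeal

theorem sUnion_of_isChain {C : Set (Set A)} (hC : ∀ I ∈ C, IsIdeal I)
    (hchain : IsChain (· ⊆ ·) C) (hne : C.Nonempty) : IsIdeal (⋃₀ C) := by
  have common : ∀ {x y : A}, x ∈ ⋃₀ C → y ∈ ⋃₀ C → ∃ I ∈ C, x ∈ I ∧ y ∈ I := by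
    rintro x y ⟨I, hI, hx⟩ ⟨J, hJ, hy⟩
    rcases hchain.total hI hJ with h | h
    · exact ⟨J, hJ, h hx, hy⟩
    · exact ⟨I, hI, hx, h hy⟩
  obtain ⟨I₀, hI₀⟩ := hne
  refine ⟨⟨I₀, hI₀, (hC I₀ hI₀).zero_mem⟩, ?_, ?_, ?_, ?_, ?_⟩
  · intro x y hx hy
    obtain ⟨I, hI, hxI, hyI⟩ := common hx hy
    exact ⟨I, hI, (hC I hI).add_mem hxI hyI⟩
  · rintro x ⟨I, hI, hx⟩
    exact ⟨I, hI, (hC I hI).neg_mem hx⟩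
  · intro x y hx hy
    obtain ⟨I, hI, hxI, hyI⟩ := common hx hy
    exact ⟨I, hI, (hC I hI).sup_mem hxI hyI⟩
  · intro x y hx hy
    obtain ⟨I, hI, hxI, hyI⟩ := common hx hy
    exact ⟨I, hI, (hC I hI).inf_mem hxI hyI⟩
  · intro x y z hx hz hxy hyz
    obtain ⟨I, hI, hxI, hzI⟩ := common hx hz
    exact ⟨I, hI, (hC I hI).convex hxI hzI hxy hyz⟩

theorem exists_isMaximalIdeal_superset_notMem {J : Set A} (hJ : IsIdeal J) {a : A} (ha : a ∉ J)
    (hgen : ∀ I, IsIdeal I → J ⊆ I → a ∈ I → I = Set.univ) :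
    ∃ M, IsMaximalIdeal M ∧ J ⊆ M ∧ a ∉ M := by
  let S : Set (Set A) := {I | IsIdeal I ∧ J ⊆ I ∧ a ∉ I}
  have hchains : ∀ C ⊆ S, IsChain (· ⊆ ·) C → C.Nonempty → ∃ ub ∈ S, ∀ I ∈ C, I ⊆ ub := by
    intro C hCS hchain hne
    obtain ⟨I₀, hI₀⟩ := hne
    refine ⟨⋃₀ C, ⟨sUnion_of_isChain (fun I hI => (hCS hI).1) hchain ⟨I₀, hI₀⟩,
      (hCS hI₀).2.1.trans (Set.subset_sUnion_of_mem hI₀), ?_⟩, fun I => Set.subset_sUnion_of_mem⟩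
    rintro ⟨I, hI, haI⟩
    exact (hCS hI).2.2 haI
  obtain ⟨M, -, hMmax⟩ := zorn_subset_nonempty S hchains J ⟨hJ, subset_rfl, ha⟩
  obtain ⟨hM, hJM, haM⟩ := hMmax.prop
  refine ⟨M, ⟨hM, fun h => haM (h ▸ Set.mem_univ a), fun I hI hIne hMI => ?_⟩, hJM, haM⟩
  have haI : a ∉ I := fun haI => hIne (hgen I hI (hJM.trans hMI) haI)
  exact (hMmax.eq_of_subset ⟨hI, hJM.trans hMI, haI⟩ hMI).symm

theorem nsmul_mem_s9 {I : Set A} (hI : IsIdeal I) {x : A} (hx : x ∈ I) (k : ℕ) : k • x ∈ I := by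
  induction k with
  | zero => simpa using hI.zero_mem
  | succ k ih => rw [succ_nsmul]; exact hI.add_mem ih hx

end IsIdeal

variable [CovariantClass A A (· + ·) (· ≤ ·)]

theorem IsIdeal.eq_univ_of_strongUnit_mem {I : Set A} (hI : IsIdeal I) {u : A}
    (hu : ∀ g : A, ∃ n : ℕ, g ≤ n • u) (huI : u ∈ I) : I = Set.univ := by
  refine Set.eq_univ_of_forall fun x => ?_
  obtain ⟨n₁, hx₁⟩ := hu x
  obtain ⟨n₂, hx₂⟩ := hu (-x)
  exact hI.convex (hI.neg_mem (hI.nsmul_mem_s9 huI n₂)) (hI.nsmul_mem_s9 huI n₁) (neg_le.1 hx₂) hx₁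

def principalIdeal (y : A) : Set A := {z | ∃ k : ℕ, -(k • y) ≤ z ∧ z ≤ k • y}

theorem isIdeal_principalIdeal {y : A} (hy : 0 ≤ y) : IsIdeal (principalIdeal y) := by
  have mono : ∀ {k k' : ℕ}, k ≤ k' → k • y ≤ k' • y := fun h => nsmul_le_nsmul_left hy h
  have le_add_left : ∀ k k' : ℕ, k • y ≤ (k + k') • y := fun k k' => mono (Nat.le_add_right k k')
  have le_add_right : ∀ k k' : ℕ, k' • y ≤ (k + k') • y := fun k k' => mono (Nat.le_add_left k' k)
  refine ⟨⟨0, by simp⟩, ?_, ?_, ?_, ?_, ?_⟩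
  · rintro x z ⟨k, hx₁, hx₂⟩ ⟨k', hz₁, hz₂⟩
    refine ⟨k + k', ?_, ?_⟩
    · rw [add_nsmul, neg_add]; exact add_le_add hx₁ hz₁
    · rw [add_nsmul]; exact add_le_add hx₂ hz₂
  · rintro x ⟨k, hx₁, hx₂⟩
    exact ⟨k, neg_le_neg_iff.2 hx₂, neg_le.1 hx₁⟩
  · rintro x z ⟨k, hx₁, hx₂⟩ ⟨k', -, hz₂⟩
    refine ⟨k + k', ?_, sup_le (hx₂.trans (le_add_left k k')) (hz₂.trans (le_add_right k k'))⟩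
    exact (neg_le_neg_iff.2 (le_add_left k k')).trans (hx₁.trans le_sup_left)
  · rintro x z ⟨k, hx₁, hx₂⟩ ⟨k', hz₁, -⟩
    refine ⟨k + k', le_inf ?_ ?_, inf_le_left.trans (hx₂.trans (le_add_left k k'))⟩
    · exact (neg_le_neg_iff.2 (le_add_left k k')).trans hx₁
    · exact (neg_le_neg_iff.2 (le_add_right k k')).trans hz₁
  · rintro x w z ⟨k, hx₁, -⟩ ⟨k', -, hz₂⟩ hxw hwz
    refine ⟨k + k', ?_, hwz.trans (hz₂.trans (le_add_right k k'))⟩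
    exact (neg_le_neg_iff.2 (le_add_left k k')).trans (hx₁.trans hxw)

theorem mem_principalIdeal_self {y : A} (hy : 0 ≤ y) : y ∈ principalIdeal y :=
  ⟨1, by simpa using (neg_nonpos.2 hy).trans hy, by simp⟩

theorem inf_add_le_inf_add_inf {a b c : A} (ha : 0 ≤ a) (hb : 0 ≤ b) (hc : 0 ≤ c) :
    a ⊓ (b + c) ≤ a ⊓ b + a ⊓ c := by
  rw [add_inf, inf_add, inf_add]
  refine le_inf (le_inf ?_ ?_) (le_inf ?_ inf_le_right)
  · exact inf_le_left.trans (le_add_of_nonneg_right ha)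
  · exact inf_le_left.trans (le_add_of_nonneg_left hb)
  · exact inf_le_left.trans (le_add_of_nonneg_right hc)

theorem nsmul_inf_eq_zero {s t : A} (hs : 0 ≤ s) (ht : 0 ≤ t) (h : s ⊓ t = 0) (k : ℕ) :
    (k • s) ⊓ t = 0 := by
  induction k with
  | zero => simp [ht]
  | succ k ih =>
    refine le_antisymm ?_ (le_inf (nsmul_nonneg hs _) ht)
    calc (k + 1) • s ⊓ t = t ⊓ (k • s + s) := by rw [succ_nsmul, inf_comm]
      _ ≤ t ⊓ (k • s) + t ⊓ s := inf_add_le_inf_add_inf ht (nsmul_nonneg hs k) hs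
      _ = 0 := by rw [inf_comm t, ih, inf_comm, h, add_zero]

theorem not_le_nsmul_posPart_sub {a u : A} (ha : 0 ≤ a) (hu : 0 ≤ u) {n : ℕ} (hnu : ¬n • a ≤ u)
    (k : ℕ) : ¬a ≤ k • (u - n • a)⁺ := by
  intro hk
  set c := (u - n • a)⁻
  have hc_le : c ≤ n • a := sup_le (by rw [neg_sub]; exact sub_le_self _ hu) (nsmul_nonneg ha n)
  have hyc : k • (u - n • a)⁺ ⊓ c = 0 :=
    nsmul_inf_eq_zero (posPart_nonneg _) (negPart_nonneg _) (posPart_inf_negPart_eq_zero _) k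
  have hac : a ⊓ c = 0 :=
    le_antisymm ((inf_le_inf_right c hk).trans hyc.le) (le_inf ha (negPart_nonneg _))
  have hc : c = 0 := by
    rw [← inf_eq_right.2 hc_le, nsmul_inf_eq_zero ha (negPart_nonneg _) hac]
  exact hnu (sub_nonneg.1 (negPart_eq_zero.1 hc))

theorem posPart_sub_add_inf (a u : A) : (u - a)⁺ + a ⊓ u = u := by
  rw [posPart_def, ← sub_self u, ← sub_inf, sub_add_cancel]

theorem eq_zero_of_abs_eq_zero {g : A} (h : |g| = 0) : g = 0 :=
  le_antisymm (h ▸ le_abs_self g) (neg_nonpos.1 (h ▸ neg_le_abs g))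

end LatticeOrderedGroup

/-- In an Archimedean abelian ℓ-group with a strong unit, any element belonging to
every maximal ideal is zero: the intersection of all maximal ideals is `{0}`. -/
theorem statement9 {A : Type*} [Lattice A] [AddCommGroup A]
    [CovariantClass A A (· + ·) (· ≤ ·)]
    (harch : IsArch A)
    (u : A) (hu0 : 0 ≤ u) (hu : ∀ g : A, ∃ n : ℕ, 1 ≤ n ∧ g ≤ n • u)
    (g : A) (hg : ∀ m : Set A, IsMaximalIdeal m → g ∈ m) :
    g = 0 := by
  have habs : ∀ m, IsMaximalIdeal m → |g| ∈ m := fun m hm =>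
    hm.1.sup_mem (hg m hm) (hm.1.neg_mem (hg m hm))
  refine eq_zero_of_abs_eq_zero (harch |g| u fun n _ => ⟨nsmul_nonneg (abs_nonneg g) n, ?_⟩)
  by_contra hnu
  have hy : 0 ≤ (u - n • |g|)⁺ := posPart_nonneg _
  have hgJ : |g| ∉ principalIdeal (u - n • |g|)⁺ := fun ⟨k, _, hk⟩ =>
    not_le_nsmul_posPart_sub (abs_nonneg g) hu0 hnu k hk
  have hgen : ∀ I, IsIdeal I → principalIdeal (u - n • |g|)⁺ ⊆ I → |g| ∈ I → I = Set.univ := by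
    intro I hI hJI hgI
    have hinf : n • |g| ⊓ u ∈ I := hI.convex hI.zero_mem (hI.nsmul_mem_s9 hgI n)
      (le_inf (nsmul_nonneg (abs_nonneg g) n) hu0) inf_le_left
    refine hI.eq_univ_of_strongUnit_mem (fun x => (hu x).imp fun _ => And.right) ?_
    rw [← posPart_sub_add_inf (n • |g|) u]
    exact hI.add_mem (hJI (mem_principalIdeal_self hy)) hinf
  obtain ⟨M, hM, -, hgM⟩ :=
    (isIdeal_principalIdeal hy).exists_isMaximalIdeal_superset_notMem hgJ hgen
  exact hgM (habs M hM)
end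

section
/- Let X be a compact Hausdorff topological space and let G be a unital ℓ-subgroup of C(X,ℝ), i.e., an additive subgroup of the continuous real-valued functions on X that is closed under pointwise ⊓ and ⊔ and contains the constant function 1. Let g ∈ G and let χ ∈ G be a component of the unit 1 (equivalently, a continuous function with values in {0,1}). Then the pointwise product g·χ belongs to G. -/
/-! If `|g| ≤ n` on `X` and `χ` takes only the values `0` and `1`, then
`g * χ = (g ⊓ n • χ) ⊔ -(n • χ)`: where `χ = 1` the right side is `(g ⊓ n) ⊔ -n = g`, and
where `χ = 0` it is `(g ⊓ 0) ⊔ 0 = 0`. On a compact space such an `n` exists, so `g * χ` is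
obtained from `g` and `χ` by the ℓ-group operations. -/

lemma eq_zero_or_eq_one_of_min_one_sub_eq_zero {a : ℝ} (h : min a (1 - a) = 0) :
    a = 0 ∨ a = 1 := by
  rcases le_total a (1 - a) with hle | hle
  · exact .inl (by rwa [min_eq_left hle] at h)
  · exact .inr (by rw [min_eq_right hle] at h; linarith)

lemma mul_eq_max_min_of_abs_le {R : Type*} [Ring R] [LinearOrder R] [IsStrictOrderedRing R]
    {a c n : R} (ha : |a| ≤ n) (hc : c = 0 ∨ c = 1) :
    a * c = max (min a (n * c)) (-(n * c)) := by
  obtain ⟨hna, han⟩ := abs_le.1 ha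
  rcases hc with rfl | rfl
  · simp
  · simp [min_eq_left han, max_eq_left hna]

namespace ContinuousMap

variable {X : Type*} [TopologicalSpace X]

lemma eq_zero_or_eq_one_of_inf_one_sub_eq_zero {χ : C(X, ℝ)} (h : χ ⊓ (1 - χ) = 0) (x : X) :
    χ x = 0 ∨ χ x = 1 :=
  eq_zero_or_eq_one_of_min_one_sub_eq_zero (congrArg (fun f : C(X, ℝ) => f x) h)

lemma mul_eq_sup_inf_nsmul {g χ : C(X, ℝ)} {n : ℕ} (hg : ∀ x, |g x| ≤ n)
    (hχ : ∀ x, χ x = 0 ∨ χ x = 1) : g * χ = (g ⊓ n • χ) ⊔ -(n • χ) := by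
  ext x
  simpa [nsmul_eq_mul] using mul_eq_max_min_of_abs_le (hg x) (hχ x)

lemma exists_nat_abs_le [CompactSpace X] (g : C(X, ℝ)) : ∃ n : ℕ, ∀ x, |g x| ≤ n :=
  ⟨⌈‖g‖⌉₊, fun x => (g.norm_coe_le_norm x).trans (Nat.le_ceil _)⟩

end ContinuousMap

theorem statement14_general {X : Type*} [TopologicalSpace X] [CompactSpace X]
    (G : Set C(X, ℝ))
    (hadd : ∀ f g : C(X, ℝ), f ∈ G → g ∈ G → f + g ∈ G)
    (hneg : ∀ f : C(X, ℝ), f ∈ G → -f ∈ G)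
    (hinf : ∀ f g : C(X, ℝ), f ∈ G → g ∈ G → f ⊓ g ∈ G)
    (hsup : ∀ f g : C(X, ℝ), f ∈ G → g ∈ G → f ⊔ g ∈ G)
    (g χ : C(X, ℝ)) (hg : g ∈ G) (hχ : χ ∈ G)
    (hcomp : χ ⊓ (1 - χ) = 0 ∧ χ ⊔ (1 - χ) = 1) :
    g * χ ∈ G := by
  let H : AddSubgroup C(X, ℝ) :=
    { carrier := G
      add_mem' := hadd _ _
      zero_mem' := by simpa using hadd _ _ hg (hneg _ hg)
      neg_mem' := hneg _ }
  obtain ⟨n, hn⟩ := g.exists_nat_abs_le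
  have hnχ : n • χ ∈ G := H.nsmul_mem hχ n
  rw [ContinuousMap.mul_eq_sup_inf_nsmul hn
    (ContinuousMap.eq_zero_or_eq_one_of_inf_one_sub_eq_zero hcomp.1)]
  exact hsup _ _ (hinf _ _ hg hnχ) (hneg _ hnχ)

/-- If `G` is a unital ℓ-subgroup of `C(X, ℝ)` for `X` compact Hausdorff, `g ∈ G`,
and `χ ∈ G` is a component of the unit `1`, then the pointwise product `g * χ`
belongs to `G`. -/
theorem statement14 {X : Type*} [TopologicalSpace X] [CompactSpace X] [T2Space X]
    (G : Set C(X, ℝ))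
    (hone : (1 : C(X, ℝ)) ∈ G)
    (hadd : ∀ f g : C(X, ℝ), f ∈ G → g ∈ G → f + g ∈ G)
    (hneg : ∀ f : C(X, ℝ), f ∈ G → -f ∈ G)
    (hinf : ∀ f g : C(X, ℝ), f ∈ G → g ∈ G → f ⊓ g ∈ G)
    (hsup : ∀ f g : C(X, ℝ), f ∈ G → g ∈ G → f ⊔ g ∈ G)
    (g χ : C(X, ℝ)) (hg : g ∈ G) (hχ : χ ∈ G)
    (hcomp : χ ⊓ (1 - χ) = 0 ∧ χ ⊔ (1 - χ) = 1) :
    g * χ ∈ G :=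
  statement14_general G hadd hneg hinf hsup g χ hg hχ hcomp
end

section
/- Let Y be a compact Hausdorff topological space, let H be a unital ℓ-subgroup of C(Y,ℝ), and let E be the smallest ℓ-subgroup of C(Y,ℝ) containing H together with every continuous {0,1}-valued function on Y. Then for e ∈ C(Y,ℝ) the following are equivalent: (1) e ∈ E; (2) there exist finitely many pairwise disjoint clopen subsets D₁, …, D_l of Y whose union is Y, and elements a₁, …, a_l ∈ H, such that e = Σᵢ aᵢ·χ_{Dᵢ}, where χ_{Dᵢ} is the characteristic function of Dᵢ and aᵢ·χ_{Dᵢ} is the pointwise product (so e agrees with aᵢ on each Dᵢ). -/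
/-- The carrier of an ℓ-subgroup of `C(Y, ℝ)`: an additive subgroup closed under
pointwise `⊓` and `⊔`. -/
def IsLSubgroup {Y : Type*} [TopologicalSpace Y] (S : Set C(Y, ℝ)) : Prop :=
  (0 : C(Y, ℝ)) ∈ S ∧
  (∀ f g : C(Y, ℝ), f ∈ S → g ∈ S → f + g ∈ S) ∧
  (∀ f : C(Y, ℝ), f ∈ S → -f ∈ S) ∧
  (∀ f g : C(Y, ℝ), f ∈ S → g ∈ S → f ⊓ g ∈ S) ∧
  (∀ f g : C(Y, ℝ), f ∈ S → g ∈ S → f ⊔ g ∈ S)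

/-- The smallest ℓ-subgroup of `C(Y, ℝ)` containing `H` together with every
continuous `{0,1}`-valued function on `Y`. -/
def genE {Y : Type*} [TopologicalSpace Y] (H : Set C(Y, ℝ)) : Set C(Y, ℝ) :=
  ⋂₀ {S : Set C(Y, ℝ) | IsLSubgroup S ∧ H ⊆ S ∧
      ∀ f : C(Y, ℝ), (∀ y : Y, f y = 0 ∨ f y = 1) → f ∈ S}

/-!
The functions that are piecewise in `H` (agree with some element of `H` on each piece of a
finite clopen partition of `Y`) contain `H` and every `{0,1}`-valued function, and they form an
ℓ-subgroup because a common refinement of two clopen partitions is again one and the lattice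
operations act pointwise; hence they contain `E`. Conversely, `E` contains every `a · χ_D` with
`a ∈ H` and `D` clopen: by compactness `|a| ≤ n` for some `n ∈ ℕ`, and then
`a · χ_D = (a ⊓ n χ_D) ⊔ (-n χ_D)`.
-/

open Set Function

theorem Finset.sum_indicator_apply_of_mem {ι α M : Type*} [Fintype ι] [AddCommMonoid M]
    {D : ι → Set α} (hD : Pairwise (Disjoint on D)) (f : ι → α → M) {i : ι} {y : α}
    (hy : y ∈ D i) : ∑ j, (D j).indicator (f j) y = f i y := by
  rw [Finset.sum_eq_single_of_mem i (Finset.mem_univ i), indicator_of_mem hy]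
  exact fun j _ hji => indicator_of_notMem (Set.disjoint_left.mp (hD hji).symm hy) _

section

variable {Y : Type*} [TopologicalSpace Y]

structure IsClopenPartition {ι : Type*} (D : ι → Set Y) : Prop where
  isClopen : ∀ i, IsClopen (D i)
  pairwise_disjoint : Pairwise (Disjoint on D)
  iUnion_eq_univ : ⋃ i, D i = univ

namespace IsClopenPartition

variable {ι κ : Type*} {D : ι → Set Y}

theorem exists_mem (hD : IsClopenPartition D) (y : Y) : ∃ i, y ∈ D i :=
  iUnion_eq_univ_iff.mp hD.iUnion_eq_univ y

theorem univ_of_unique [Unique ι] : IsClopenPartition fun _ : ι => (univ : Set Y) where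
  isClopen _ := isClopen_univ
  pairwise_disjoint := Subsingleton.pairwise
  iUnion_eq_univ := iUnion_const univ

theorem of_isClopen {U : Set Y} (hU : IsClopen U) :
    IsClopenPartition fun b : Bool => cond b U Uᶜ where
  isClopen b := by cases b; exacts [hU.compl, hU]
  pairwise_disjoint := by
    rintro (_ | _) (_ | _) h
    exacts [absurd rfl h, disjoint_compl_left, disjoint_compl_right, absurd rfl h]
  iUnion_eq_univ := by rw [← union_eq_iUnion, union_compl_self]

theorem comp_equiv (hD : IsClopenPartition D) (σ : κ ≃ ι) : IsClopenPartition (D ∘ σ) where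
  isClopen k := hD.isClopen (σ k)
  pairwise_disjoint := hD.pairwise_disjoint.comp_of_injective σ.injective
  iUnion_eq_univ := (σ.surjective.iUnion_comp D).trans hD.iUnion_eq_univ

theorem inter {E : κ → Set Y} (hD : IsClopenPartition D) (hE : IsClopenPartition E) :
    IsClopenPartition fun p : ι × κ => D p.1 ∩ E p.2 where
  isClopen p := (hD.isClopen p.1).inter (hE.isClopen p.2)
  pairwise_disjoint := by
    rintro ⟨i, k⟩ ⟨i', k'⟩ hne
    by_cases hi : i = i'
    · have hk : k ≠ k' := by rintro rfl; exact hne (by rw [hi])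
      exact (hE.pairwise_disjoint hk).mono inter_subset_right inter_subset_right
    · exact (hD.pairwise_disjoint hi).mono inter_subset_left inter_subset_left
  iUnion_eq_univ := eq_univ_of_forall fun y => by
    obtain ⟨i, hi⟩ := hD.exists_mem y
    obtain ⟨k, hk⟩ := hE.exists_mem y
    exact mem_iUnion.mpr ⟨(i, k), hi, hk⟩

end IsClopenPartition

def IsPiecewiseIn (H : Set C(Y, ℝ)) (e : C(Y, ℝ)) : Prop :=
  ∃ (ι : Type) (_ : Fintype ι) (D : ι → Set Y) (a : ι → C(Y, ℝ)),
    IsClopenPartition D ∧ (∀ i, a i ∈ H) ∧ ∀ i, ∀ y ∈ D i, e y = a i y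

namespace IsPiecewiseIn

variable {H : Set C(Y, ℝ)} {e f : C(Y, ℝ)}

theorem of_mem (hf : f ∈ H) : IsPiecewiseIn H f :=
  ⟨Unit, inferInstance, _, fun _ => f, .univ_of_unique, fun _ => hf, fun _ _ _ => rfl⟩

theorem of_zero_or_one (hzero : 0 ∈ H) (hone : 1 ∈ H) (hf : ∀ y, f y = 0 ∨ f y = 1) :
    IsPiecewiseIn H f := by
  have hU : f ⁻¹' {1} = (f ⁻¹' {0})ᶜ := by
    ext y
    rcases hf y with h | h <;> simp [h]
  have hclopen : IsClopen (f ⁻¹' {1}) :=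
    ⟨isClosed_singleton.preimage f.continuous,
      hU ▸ (isClosed_singleton.preimage f.continuous).isOpen_compl⟩
  refine ⟨Bool, inferInstance, _, fun b => cond b 1 0, .of_isClopen hclopen,
    fun b => by cases b <;> assumption, ?_⟩
  rintro (_ | _) y hy
  · simpa [hU] using hy
  · simpa using hy

theorem map (op : C(Y, ℝ) → C(Y, ℝ)) (φ : ℝ → ℝ) (hop : ∀ f, f ∈ H → op f ∈ H)
    (hφ : ∀ f y, op f y = φ (f y)) (he : IsPiecewiseIn H e) : IsPiecewiseIn H (op e) := by
  obtain ⟨ι, _, D, a, hD, ha, hea⟩ := he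
  exact ⟨ι, inferInstance, D, fun i => op (a i), hD, fun i => hop _ (ha i),
    fun i y hy => by rw [hφ, hφ, hea i y hy]⟩

theorem map₂ (op : C(Y, ℝ) → C(Y, ℝ) → C(Y, ℝ)) (φ : ℝ → ℝ → ℝ)
    (hop : ∀ f g, f ∈ H → g ∈ H → op f g ∈ H) (hφ : ∀ f g y, op f g y = φ (f y) (g y))
    (he : IsPiecewiseIn H e) (hf : IsPiecewiseIn H f) : IsPiecewiseIn H (op e f) := by
  obtain ⟨ι, _, D, a, hD, ha, hea⟩ := he
  obtain ⟨κ, _, E, b, hE, hb, hfb⟩ := hf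
  exact ⟨ι × κ, inferInstance, _, fun p => op (a p.1) (b p.2), hD.inter hE,
    fun p => hop _ _ (ha p.1) (hb p.2),
    fun p y hy => by rw [hφ, hφ, hea _ y hy.1, hfb _ y hy.2]⟩

theorem exists_sum_indicator (he : IsPiecewiseIn H e) :
    ∃ (l : ℕ) (D : Fin l → Set Y) (a : Fin l → C(Y, ℝ)),
      (∀ i, IsClopen (D i)) ∧
      (∀ i j, i ≠ j → Disjoint (D i) (D j)) ∧
      (⋃ i, D i) = univ ∧
      (∀ i, a i ∈ H) ∧
      ∀ y : Y, e y = ∑ i, (D i).indicator (⇑(a i)) y := by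
  obtain ⟨ι, _, D, a, hD, ha, hea⟩ := he
  set σ := (Fintype.equivFin ι).symm
  have hDσ := hD.comp_equiv σ
  refine ⟨_, D ∘ σ, a ∘ σ, hDσ.isClopen, fun i j => @hDσ.pairwise_disjoint i j,
    hDσ.iUnion_eq_univ, fun i => ha (σ i), fun y => ?_⟩
  obtain ⟨i, hi⟩ := hDσ.exists_mem y
  rw [Finset.sum_indicator_apply_of_mem hDσ.pairwise_disjoint _ hi]
  exact hea _ y hi

end IsPiecewiseIn

theorem isLSubgroup_setOf_isPiecewiseIn {H : Set C(Y, ℝ)} (hH : IsLSubgroup H) :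
    IsLSubgroup {e | IsPiecewiseIn H e} := by
  obtain ⟨hzero, hadd, hneg, hinf, hsup⟩ := hH
  exact ⟨.of_mem hzero,
    fun _ _ => .map₂ _ (· + ·) hadd fun _ _ _ => rfl,
    fun _ => .map _ (- ·) hneg fun _ _ => rfl,
    fun _ _ => .map₂ _ (· ⊓ ·) hinf fun _ _ _ => rfl,
    fun _ _ => .map₂ _ (· ⊔ ·) hsup fun _ _ _ => rfl⟩

namespace IsLSubgroup

variable {S : Set C(Y, ℝ)}

def toAddSubgroup (hS : IsLSubgroup S) : AddSubgroup C(Y, ℝ) where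
  carrier := S
  zero_mem' := hS.1
  add_mem' := hS.2.1 _ _
  neg_mem' := hS.2.2.1 _

theorem mul_mem_of_zero_or_one [CompactSpace Y] (hS : IsLSubgroup S) {a χ : C(Y, ℝ)}
    (ha : a ∈ S) (hχ : χ ∈ S) (h01 : ∀ y, χ y = 0 ∨ χ y = 1) : a * χ ∈ S := by
  obtain ⟨n, hn⟩ := exists_nat_ge ‖a‖
  have hbound : ∀ y, |a y| ≤ n := fun y => (a.norm_coe_le_norm y).trans hn
  have htrunc : a * χ = a ⊓ n • χ ⊔ -(n • χ) := by
    ext y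
    rcases h01 y with h | h
    · simp [h]
    · simp [h, (abs_le.mp (hbound y)).1, (abs_le.mp (hbound y)).2]
  have hnχ : n • χ ∈ S := hS.toAddSubgroup.nsmul_mem hχ n
  obtain ⟨-, -, hneg, hinf, hsup⟩ := hS
  rw [htrunc]
  exact hsup _ _ (hinf _ _ ha hnχ) (hneg _ hnχ)

end IsLSubgroup

end

theorem statement15_general {Y : Type*} [TopologicalSpace Y] [CompactSpace Y]
    (H : Set C(Y, ℝ)) (hH : IsLSubgroup H) (hone : (1 : C(Y, ℝ)) ∈ H)
    (e : C(Y, ℝ)) :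
    e ∈ genE H ↔
      ∃ (l : ℕ) (D : Fin l → Set Y) (a : Fin l → C(Y, ℝ)),
        (∀ i, IsClopen (D i)) ∧
        (∀ i j, i ≠ j → Disjoint (D i) (D j)) ∧
        (⋃ i, D i) = Set.univ ∧
        (∀ i, a i ∈ H) ∧
        ∀ y : Y, e y = ∑ i, (D i).indicator (⇑(a i)) y := by
  constructor
  · intro he
    have hE : genE H ⊆ {e | IsPiecewiseIn H e} :=
      sInter_subset_of_mem ⟨isLSubgroup_setOf_isPiecewiseIn hH, fun _ => .of_mem,
        fun _ => .of_zero_or_one hH.1 hone⟩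
    exact (hE he).exists_sum_indicator
  · rintro ⟨l, D, a, hD, -, -, ha, hea⟩ S ⟨hS, hHS, hχS⟩
    let χ i : C(Y, ℝ) := LocallyConstant.charFn ℝ (hD i)
    have hχ i : ⇑(χ i) = (D i).indicator 1 := LocallyConstant.coe_charFn ℝ (hD i)
    have hχ01 i y : χ i y = 0 ∨ χ i y = 1 := by
      by_cases hy : y ∈ D i <;> simp [hχ, hy]
    have hsum : e = ∑ i, a i * χ i := by
      ext y
      rw [hea y, ContinuousMap.sum_apply]
      refine Finset.sum_congr rfl fun i _ => ?_
      by_cases hy : y ∈ D i <;> simp [hχ, hy]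
    rw [hsum]
    exact hS.toAddSubgroup.sum_mem fun i _ =>
      hS.mul_mem_of_zero_or_one (hHS (ha i)) (hχS _ (hχ01 i)) (hχ01 i)

/-- For `Y` compact Hausdorff and `H` a unital ℓ-subgroup of `C(Y, ℝ)`, a function
`e` lies in the ℓ-subgroup generated by `H` and all characteristic functions iff
there is a finite clopen partition `D₁, …, D_l` of `Y` and elements `aᵢ ∈ H`
with `e = Σᵢ aᵢ·χ_{Dᵢ}` (so `e` agrees with `aᵢ` on each `Dᵢ`). -/
theorem statement15 {Y : Type*} [TopologicalSpace Y] [CompactSpace Y] [T2Space Y]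
    (H : Set C(Y, ℝ)) (hH : IsLSubgroup H) (hone : (1 : C(Y, ℝ)) ∈ H)
    (e : C(Y, ℝ)) :
    e ∈ genE H ↔
      ∃ (l : ℕ) (D : Fin l → Set Y) (a : Fin l → C(Y, ℝ)),
        (∀ i, IsClopen (D i)) ∧
        (∀ i j, i ≠ j → Disjoint (D i) (D j)) ∧
        (⋃ i, D i) = Set.univ ∧
        (∀ i, a i ∈ H) ∧
        ∀ y : Y, e y = ∑ i, (D i).indicator (⇑(a i)) y :=
  statement15_general H hH hone e
end
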